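/- Over a mixed causal diagram G whose bidirected arcs form a disjoint union of complete graphs, every instance of the counterfactual independence schema cf-sep is an instance of d-separation in the parallel-network (counterfactual) graph: if node sets {Y_i} and {Y'_j} share no variable and have no bidirected arc between any Y_i and Y'_j in G, then in the graph obtained by severing all edges into each node Y_i and Y'_j (intervening on their parents), the sets {(Y_i)_{p_i}} and {(Y'_j)_{p'_j}} are d-separated given the empty set. -/

import Mathlib

open scoped Classical

/-- An intervention: a partial assignment of values to variables. -/
def Itv (V : Type*) (Val : V → Type*) := ∀ v, Option (Val v)

/-- A potential outcome `Y_x`: an outcome variable together with an intervention. -/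
structure PO (V : Type*) (Val : V → Type*) where
  Y : V
  x : Itv V Val

/-- A Rubin causal model (with a probability distribution on its units). -/
structure RCM (U : Type*) (V : Type*) (Val : V → Type*) where
  O : Set (PO V Val)
  F : (o : PO V Val) → U → Val o.Y
  P : U → ℝ
  P_nonneg : ∀ u, 0 ≤ P u
  P_sum : ∑ᶠ u, P u = 1

/-- Joint valuations ("counterfactuals") of a set of potential outcomes. -/
def CFVal {V : Type*} {Val : V → Type*} (O : Set (PO V Val)) :=
  (o : O) → Val o.1.Y

/-- The (pushforward) counterfactual distribution of an RCM, computed on a set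
of potential outcomes. -/
noncomputable def RCM.cfOn {U V : Type*} {Val : V → Type*} (R : RCM U V Val)
    (O : Set (PO V Val)) (g : CFVal O) : ℝ :=
  ∑ᶠ u, if ∀ o : O, R.F o.1 u = g o then R.P u else 0

/-- The counterfactual distribution of an RCM on its own defined outcomes. -/
noncomputable def RCM.cf {U V : Type*} {Val : V → Type*} (R : RCM U V Val)
    (g : CFVal R.O) : ℝ := R.cfOn R.O g

/-- Effectiveness: intervened variables take their intervened values. -/
def RCM.Effective {U V : Type*} {Val : V → Type*} (R : RCM U V Val) : Prop :=
  ∀ o, o ∈ R.O → ∀ u, ∀ y : Val o.Y, o.x o.Y = some y → R.F o u = y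

/-- Update an intervention at one variable. -/
noncomputable def upd {V : Type*} {Val : V → Type*} (x : Itv V Val) (Y : V) (y : Val Y) :
    Itv V Val :=
  fun v => if h : v = Y then some (cast (congrArg Val h.symm) y) else x v

/-- Composition, at every unit, whenever the relevant outcomes are defined. -/
def RCM.Composition {U V : Type*} {Val : V → Type*} (R : RCM U V Val) : Prop :=
  ∀ (u : U) (Y Z : V) (w : Itv V Val),
    (⟨Y, w⟩ : PO V Val) ∈ R.O → (⟨Z, w⟩ : PO V Val) ∈ R.O →
    (⟨Z, upd w Y (R.F ⟨Y, w⟩ u)⟩ : PO V Val) ∈ R.O →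
    R.F ⟨Z, upd w Y (R.F ⟨Y, w⟩ u)⟩ u = R.F ⟨Z, w⟩ u

/-- Reversibility, at every unit, whenever the relevant outcomes are defined. -/
def RCM.Reversibility {U V : Type*} {Val : V → Type*} (R : RCM U V Val) : Prop :=
  ∀ (u : U) (Y Z : V) (w : Itv V Val) (y : Val Y) (z : Val Z), Y ≠ Z →
    (⟨Y, upd w Z z⟩ : PO V Val) ∈ R.O → (⟨Z, upd w Y y⟩ : PO V Val) ∈ R.O →
    (⟨Y, w⟩ : PO V Val) ∈ R.O →
    R.F ⟨Y, upd w Z z⟩ u = y → R.F ⟨Z, upd w Y y⟩ u = z →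
    R.F ⟨Y, w⟩ u = y

/-- A structural causal model. -/
structure SCM (Uex : Type*) (V : Type*) (Val : V → Type*) where
  Pa : V → Set V
  Pa_irr : ∀ v, v ∉ Pa v
  f : (v : V) → ((w : V) → Val w) → Uex → Val v
  f_dep : ∀ v a b u, (∀ w ∈ Pa v, a w = b w) → f v a u = f v b u
  P : Uex → ℝ
  P_nonneg : ∀ u, 0 ≤ P u
  P_sum : ∑ᶠ u, P u = 1

/-- `s` solves the manipulated model `M_x` under exogenous setting `u`. -/
def SCM.IsSol {Uex V : Type*} {Val : V → Type*} (M : SCM Uex V Val)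
    (x : Itv V Val) (u : Uex) (s : ∀ w, Val w) : Prop :=
  ∀ w, s w = (x w).getD (M.f w s u)

/-- `M` has a unique solution under every intervention and exogenous setting. -/
def SCM.Uniq {Uex V : Type*} {Val : V → Type*} (M : SCM Uex V Val) : Prop :=
  ∀ (x : Itv V Val) (u : Uex), ∃! s, M.IsSol x u s

/-- The potential outcome `Y_x(u)` of an SCM with unique solutions. -/
noncomputable def SCM.po {Uex V : Type*} {Val : V → Type*} (M : SCM Uex V Val)
    (h : M.Uniq) (o : PO V Val) (u : Uex) : Val o.Y :=
  (h o.x u).exists.choose o.Y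

/-- The counterfactual distribution of an SCM on a set of potential outcomes. -/
noncomputable def SCM.cf {Uex V : Type*} {Val : V → Type*} (M : SCM Uex V Val)
    (h : M.Uniq) (O : Set (PO V Val)) (g : CFVal O) : ℝ :=
  ∑ᶠ u, if ∀ o : O, M.po h o.1 u = g o then M.P u else 0

/-- `M` represents `R`: the counterfactual distribution of `M` marginalizes to
that of `R` on the outcomes defined by `R`. -/
def Represents {Uex U V : Type*} {Val : V → Type*} (M : SCM Uex V Val) (h : M.Uniq)
    (R : RCM U V Val) : Prop :=
  ∀ g : CFVal R.O, M.cf h R.O g = R.cf g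

/-- `R` is representable by some SCM with unique solutions. -/
def RCM.Representable {U V : Type*} {Val : V → Type*} (R : RCM U V Val) : Prop :=
  ∃ (Uex : Type) (M : SCM Uex V Val) (h : M.Uniq), Finite Uex ∧ Represents M h R

/-- `R'` extends `R`. -/
def RCM.Extends {U V : Type*} {Val : V → Type*} (R' R : RCM U V Val) : Prop :=
  R.O ⊆ R'.O ∧ (∀ o ∈ R.O, R'.F o = R.F o) ∧ R'.P = R.P

/-- A full RCM defines every potential outcome. -/
def RCM.Full {U V : Type*} {Val : V → Type*} (R : RCM U V Val) : Prop :=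
  R.O = Set.univ

/-- `R'` is a submodel of `R`. -/
def Submodel {U V : Type*} {Val : V → Type*} (R' R : RCM U V Val) : Prop :=
  R'.O ⊆ R.O ∧ (∀ o ∈ R'.O, R'.F o = R.F o) ∧ R'.P = R.P

/-- A d-connecting walk given conditioning set `Z`: consecutive nodes are
adjacent, every interior collider has a descendant in `Z`, and every interior
non-collider is outside `Z`. -/
def IsDConnWalk {N : Type*} (edge : N → N → Prop) (Z : Set N) (p : List N) : Prop :=
  List.Chain' (fun a b => edge a b ∨ edge b a) p ∧
  ∀ i : ℕ, ∀ h0 : 0 < i, ∀ h2 : i + 1 < p.length,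
    ((edge (p.get ⟨i - 1, by omega⟩) (p.get ⟨i, by omega⟩) ∧
        edge (p.get ⟨i + 1, h2⟩) (p.get ⟨i, by omega⟩)) →
      ∃ d ∈ Z, Relation.ReflTransGen edge (p.get ⟨i, by omega⟩) d) ∧
    (¬(edge (p.get ⟨i - 1, by omega⟩) (p.get ⟨i, by omega⟩) ∧
        edge (p.get ⟨i + 1, h2⟩) (p.get ⟨i, by omega⟩)) →
      p.get ⟨i, by omega⟩ ∉ Z)

/-- `A` and `B` are d-separated given `Z`. -/
def DSeparated {N : Type*} (edge : N → N → Prop) (A B Z : Set N) : Prop :=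
  ¬ ∃ p : List N, IsDConnWalk edge Z p ∧
      (∃ a ∈ A, p.head? = some a) ∧ (∃ b ∈ B, p.getLast? = some b)

/-- A clique of the bidirected relation `B`. -/
def IsClique {V : Type*} (B : V → V → Prop) (c : Set V) : Prop :=
  ∀ a ∈ c, ∀ b ∈ c, a ≠ b → B a b

/-- A maximal clique of the bidirected relation `B`. -/
def IsMaxClique {V : Type*} (B : V → V → Prop) (c : Set V) : Prop :=
  IsClique B c ∧ ∀ d, IsClique B d → c ⊆ d → d = c

/-- The nodes of the parallel-network (counterfactual) graph: one copy of each
variable per potential outcome `(Y_i)_{p_i}`, `(Y'_j)_{p'_j}` (indexed by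
`I ⊕ J`), together with one shared latent node per maximal bidirected clique. -/
def CFNode (V : Type*) (I J : Type*) (B : V → V → Prop) : Type _ :=
  ((I ⊕ J) × V) ⊕ {c : Set V // IsMaxClique B c}

/-- Edges of the parallel-network graph: within the copy associated with a
target node the parents of the target are fixed (hence removed), and each
latent clique node points into all of its surviving members across all
copies. -/
def cfEdge {V I J : Type*} (E B : V → V → Prop) (Yi : I → V) (Yj : J → V) :
    CFNode V I J B → CFNode V I J B → Prop :=
  fun n m =>
    match n, m with
    | Sum.inl (k, a), Sum.inl (k', b) =>
        k = k' ∧ E a b ∧ ¬ E a (Sum.elim Yi Yj k) ∧ ¬ E b (Sum.elim Yi Yj k')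
    | Sum.inr c, Sum.inl (k, b) => b ∈ c.1 ∧ ¬ E b (Sum.elim Yi Yj k)
    | _, _ => False

/-! With nothing conditioned on, a d-connecting walk has no colliders, so once it follows an
edge forward it keeps going forward. In the parallel network each target copy `(Y_k)_{p_k}` has
only latent parents, and latent nodes have no parents at all. A walk from `(Y_i)_{p_i}` to
`(Y'_j)_{p'_j}` would therefore have to be `(Y_i)_{p_i} ← L → (Y'_j)_{p'_j}` for a single latent
node `L`, i.e. a maximal bidirected clique containing both `Y_i` and `Y'_j`, which is excluded. -/

def IsSource {N : Type*} (edge : N → N → Prop) (w : N) : Prop :=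
  ∀ v, ¬ edge v w

theorem List.IsChain.eq_nil_of_forall_parent_isSource {N : Type*} {edge : N → N → Prop}
    {x y b : N} {l : List N} (hc : List.IsChain edge (x :: y :: l))
    (hlast : (x :: y :: l).getLast? = some b) (hb : ∀ w, edge w b → IsSource edge w) :
    l = [] := by
  induction l generalizing x y with
  | nil => rfl
  | cons z l ih =>
    obtain ⟨hxy, hc⟩ := List.isChain_cons_cons.mp hc
    rw [List.getLast?_cons_cons] at hlast
    obtain rfl := ih hc hlast
    obtain rfl : z = b := by simpa using hlast
    exact absurd hxy (hb y (List.isChain_cons_cons.mp hc).1 x)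

theorem dSeparated_of_forall_singleton {N : Type*} {edge : N → N → Prop} {A B Z : Set N}
    (h : ∀ a ∈ A, ∀ b ∈ B, DSeparated edge {a} {b} Z) : DSeparated edge A B Z :=
  fun ⟨p, hp, ⟨a, ha, hhead⟩, ⟨b, hb, hlast⟩⟩ =>
    h a ha b hb ⟨p, hp, ⟨a, rfl, hhead⟩, ⟨b, rfl, hlast⟩⟩

namespace IsDConnWalk

variable {N : Type*} {edge : N → N → Prop} {Z : Set N}

theorem tail {x : N} {l : List N} (h : IsDConnWalk edge Z (x :: l)) : IsDConnWalk edge Z l := by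
  refine ⟨h.1.tail, fun i h0 h2 => ?_⟩
  have := h.2 (i + 1) (by omega) (by simp only [List.length_cons]; omega)
  obtain ⟨i, rfl⟩ := Nat.exists_eq_add_of_lt h0
  simpa using this

theorem adj {x y : N} {l : List N} (h : IsDConnWalk edge Z (x :: y :: l)) :
    edge x y ∨ edge y x :=
  (List.isChain_cons_cons.mp h.1).1

theorem not_collider {x y z : N} {l : List N} (h : IsDConnWalk edge ∅ (x :: y :: z :: l)) :
    ¬ (edge x y ∧ edge z y) := fun hc => by
  obtain ⟨d, hd, -⟩ := (h.2 1 one_pos (by simp)).1 hc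
  exact hd

theorem isChain_of_edge {x y : N} {l : List N} (h : IsDConnWalk edge ∅ (x :: y :: l))
    (hxy : edge x y) : List.IsChain edge (x :: y :: l) := by
  induction l generalizing x y with
  | nil => exact List.IsChain.cons_cons hxy (List.IsChain.singleton y)
  | cons z l ih =>
    have hyz : edge y z := h.tail.adj.resolve_right fun hzy => h.not_collider ⟨hxy, hzy⟩
    exact List.IsChain.cons_cons hxy (ih h.tail hyz)

end IsDConnWalk

theorem dSeparated_singleton_empty_of_forall_parent_isSource {N : Type*} {edge : N → N → Prop}
    {a b : N} (hne : a ≠ b) (hab : ¬ edge a b) (hba : ¬ edge b a)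
    (ha : ∀ w, edge w a → IsSource edge w) (hb : ∀ w, edge w b → IsSource edge w)
    (hcommon : ∀ w, edge w a → ¬ edge w b) :
    DSeparated edge {a} {b} ∅ := by
  rintro ⟨p, hp, ⟨a', ha', hhead⟩, ⟨b', hb', hlast⟩⟩
  simp only [Set.mem_singleton_iff] at ha' hb'
  subst a' b'
  obtain ⟨rest, rfl⟩ := List.head?_eq_some_iff.mp hhead
  rcases rest with _ | ⟨y, rest⟩
  · exact hne (by simpa using hlast)
  rcases hp.adj with hay | hya
  · obtain rfl := (hp.isChain_of_edge hay).eq_nil_of_forall_parent_isSource hlast hb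
    obtain rfl : y = b := by simpa using hlast
    exact hab hay
  rcases rest with _ | ⟨z, rest⟩
  · obtain rfl : y = b := by simpa using hlast
    exact hba hya
  have hyz : edge y z := hp.tail.adj.resolve_right (ha y hya z)
  rw [List.getLast?_cons_cons] at hlast
  obtain rfl := (hp.tail.isChain_of_edge hyz).eq_nil_of_forall_parent_isSource hlast hb
  obtain rfl : z = b := by simpa using hlast
  exact hcommon y hya hyz

section cfEdge

variable {V I J : Type*} {E B : V → V → Prop} {Yi : I → V} {Yj : J → V}

theorem isSource_cfEdge_latent (c : {c : Set V // IsMaxClique B c}) :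
    IsSource (cfEdge E B Yi Yj) (Sum.inr c) := by
  rintro (_ | _) h <;> exact h

theorem exists_latent_of_cfEdge_target {k : I ⊕ J} {n : CFNode V I J B}
    (h : cfEdge E B Yi Yj n (Sum.inl (k, Sum.elim Yi Yj k))) :
    ∃ c : {c : Set V // IsMaxClique B c}, n = Sum.inr c ∧ Sum.elim Yi Yj k ∈ c.1 := by
  rcases n with ⟨k', a⟩ | c
  · obtain ⟨rfl, hab, hak, -⟩ := h
    exact absurd hab hak
  · exact ⟨c, rfl, h.1⟩

end cfEdge

theorem stmt19 {V I J : Type} (E B : V → V → Prop)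
    (Yi : I → V) (Yj : J → V)
    (hVar : ∀ i j, Yi i ≠ Yj j)
    (hNoBi : ∀ i j, ¬ B (Yi i) (Yj j)) :
    DSeparated (cfEdge E B Yi Yj)
      {n | ∃ i, n = Sum.inl (Sum.inl i, Yi i)}
      {n | ∃ j, n = Sum.inl (Sum.inr j, Yj j)}
      (∅ : Set (CFNode V I J B)) := by
  refine dSeparated_of_forall_singleton fun _ ⟨i, hi⟩ _ ⟨j, hj⟩ => ?_
  subst hi hj
  have parent_i := @exists_latent_of_cfEdge_target _ _ _ E B Yi Yj (Sum.inl i)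
  have parent_j := @exists_latent_of_cfEdge_target _ _ _ E B Yi Yj (Sum.inr j)
  refine dSeparated_singleton_empty_of_forall_parent_isSource nofun ?_ ?_ ?_ ?_ ?_
  · exact fun h => Sum.inl_ne_inr (parent_j h).choose_spec.1
  · exact fun h => Sum.inl_ne_inr (parent_i h).choose_spec.1
  · intro w h
    obtain ⟨c, rfl, -⟩ := parent_i h
    exact isSource_cfEdge_latent c
  · intro w h
    obtain ⟨c, rfl, -⟩ := parent_j h
    exact isSource_cfEdge_latent c
  · intro w hwi hwj
    obtain ⟨c, rfl, hci⟩ := parent_i hwi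
    obtain ⟨c', hcc', hcj⟩ := parent_j hwj
    obtain rfl := Sum.inr_injective hcc'
    exact hNoBi i j (c.2.1 _ hci _ hcj (hVar i j))
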